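/- arXiv:2406.00558 — 2 statements merged into one kernel-verified Lean document; each statement's English description precedes it below -/
import Mathlib

section
/- Let n ≥ 2 and let D be a closed, s-convex, proper subset of the round n-sphere Sⁿ with nonempty interior (this is the case X = Sⁿ of Proposition: the totally geodesic 2-spheres of curvature 1 in Sⁿ are exactly the great 2-spheres Sⁿ ∩ V for 3-dimensional linear subspaces V). Then for every 3-dimensional linear subspace V of EuclideanSpace ℝ (Fin (n+1)), the intersection D ∩ V is contained in an open hemisphere of the great 2-sphere Sⁿ ∩ V: there exists z ∈ Sⁿ ∩ V such that ⟪z, x⟫_ℝ < 0 for all x ∈ D ∩ V. -/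
/-!
A closed s-convex proper subset `D` of the sphere contains no antipodal pair, so any two of its
points bound a great-circle arc of length `< π` inside `D`, and their normalized positive
combinations lie on that arc. Hence `{0} ∪ ℝ_{>0} • D` is a closed convex cone missing `-x` for
every `x ∈ D`. Separating each such `-x` from the cone and summing the separating vectors over a
finite subcover of the compact set `D` gives `y` with `⟪x, y⟫ > 0` on `D`; minus the normalized
projection of `y` onto `V` is the required `z`.
-/

notation "⟪" x ", " y "⟫_ℝ" => @inner ℝ _ _ x y

/-- The intrinsic (angular) distance on the unit sphere in `EuclideanSpace ℝ (Fin (n+1))`. -/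
noncomputable def sphDist {n : ℕ} (x y : EuclideanSpace ℝ (Fin (n + 1))) : ℝ :=
  Real.arccos ⟪x, y⟫_ℝ

/-- `γ` is a minimizing geodesic segment from `x` to `y` in the round unit `n`-sphere. -/
def IsMinGeodesic {n : ℕ} (x y : EuclideanSpace ℝ (Fin (n + 1)))
    (γ : ℝ → EuclideanSpace ℝ (Fin (n + 1))) : Prop :=
  (∀ t ∈ Set.Icc (0 : ℝ) (sphDist x y),
      γ t ∈ Metric.sphere (0 : EuclideanSpace ℝ (Fin (n + 1))) 1) ∧
  γ 0 = x ∧ γ (sphDist x y) = y ∧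
  ∀ s ∈ Set.Icc (0 : ℝ) (sphDist x y), ∀ t ∈ Set.Icc (0 : ℝ) (sphDist x y),
    sphDist (γ s) (γ t) = |s - t|

/-- `D` is s-convex: every minimizing geodesic segment joining two points of `D` lies in `D`. -/
def SConvex {n : ℕ} (D : Set (EuclideanSpace ℝ (Fin (n + 1)))) : Prop :=
  ∀ x ∈ D, ∀ y ∈ D, ∀ γ : ℝ → EuclideanSpace ℝ (Fin (n + 1)),
    IsMinGeodesic x y γ → ∀ t ∈ Set.Icc (0 : ℝ) (sphDist x y), γ t ∈ D

open Real Set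

section GreatArc

variable {M : Type*} [AddCommGroup M] [Module ℝ M]

noncomputable def greatArc (x u : M) (t : ℝ) : M :=
  cos t • x + sin t • u

@[simp] lemma greatArc_zero (x u : M) : greatArc x u 0 = x := by
  simp [greatArc]

lemma exists_add_smul_greatArc_eq_smul_greatArc (x u : M) {d p q : ℝ} (hd : d ∈ Ioo 0 π)
    (hp : 0 < p) (hq : 0 < q) :
    ∃ N > (0 : ℝ), ∃ t ∈ Icc 0 d, p • x + q • greatArc x u d = N • greatArc x u t := by
  set a := p + q * cos d
  set b := q * sin d
  have hsind : 0 < sin d := sin_pos_of_pos_of_lt_pi hd.1 hd.2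
  have hb : 0 < b := mul_pos hq hsind
  set N := √(a ^ 2 + b ^ 2)
  have hN : 0 < N := sqrt_pos.2 (by positivity)
  have hN2 : N ^ 2 = a ^ 2 + b ^ 2 := sq_sqrt (by positivity)
  have haN : |a / N| ≤ 1 := by
    rw [abs_div, abs_of_pos hN, div_le_one hN, ← sqrt_sq_eq_abs]
    exact sqrt_le_sqrt (by nlinarith)
  set t := arccos (a / N)
  have hcos : cos t = a / N := cos_arccos (abs_le.1 haN).1 (abs_le.1 haN).2
  have hsin : sin t = b / N := by
    rw [sin_arccos, show 1 - (a / N) ^ 2 = (b / N) ^ 2 by field_simp; linarith,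
      sqrt_sq (by positivity)]
  have htd : t ≤ d := by
    by_contra! hdt
    have hsin_sub : sin (d - t) = p * sin d / N := by
      rw [sin_sub, hcos, hsin]; field_simp; ring
    have hsin_nonpos : sin (d - t) ≤ 0 :=
      sin_nonpos_of_nonpos_of_neg_pi_le (by linarith) (by linarith [hd.1, arccos_le_pi (a / N)])
    have : 0 < p * sin d / N := by positivity
    linarith
  refine ⟨N, hN, t, ⟨arccos_nonneg _, htd⟩, ?_⟩
  simp only [greatArc, hcos, hsin, smul_add, smul_smul]
  match_scalars <;> field_simp <;> ring

variable {F : Type*} [NormedAddCommGroup F] [InnerProductSpace ℝ F] {x u : F}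

lemma inner_greatArc (hx : ‖x‖ = 1) (hu : ‖u‖ = 1) (hxu : ⟪x, u⟫_ℝ = 0) (s t : ℝ) :
    ⟪greatArc x u s, greatArc x u t⟫_ℝ = cos (s - t) := by
  have hux : ⟪u, x⟫_ℝ = 0 := by rw [real_inner_comm, hxu]
  simp only [greatArc, inner_add_left, inner_add_right, real_inner_smul_left,
    real_inner_smul_right, real_inner_self_eq_norm_sq, hx, hu, hxu, hux, cos_sub]
  ring

lemma norm_greatArc (hx : ‖x‖ = 1) (hu : ‖u‖ = 1) (hxu : ⟪x, u⟫_ℝ = 0) (t : ℝ) :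
    ‖greatArc x u t‖ = 1 := by
  have h := inner_greatArc hx hu hxu t t
  rwa [sub_self, cos_zero, real_inner_self_eq_norm_sq,
    pow_eq_one_iff_of_nonneg (norm_nonneg _) two_ne_zero] at h

lemma exists_eq_greatArc {z : F} (hx : ‖x‖ = 1) (hz : ‖z‖ = 1) (hzx : z ≠ x) (hzx' : z ≠ -x) :
    ∃ u, ‖u‖ = 1 ∧ ⟪x, u⟫_ℝ = 0 ∧ ∃ t ∈ Ioo 0 π, z = greatArc x u t := by
  set c := ⟪x, z⟫_ℝ
  have hc1 : c < 1 := lt_of_le_of_ne (real_inner_le_norm x z |>.trans (by rw [hx, hz, one_mul]))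
    fun h => hzx ((inner_eq_one_iff_of_norm_eq_one hx hz).1 h).symm
  have hc1' : -1 < c := by
    refine lt_of_le_of_ne ?_ fun h => hzx' ?_
    · have := neg_abs_le c |>.trans' (neg_le_neg (abs_real_inner_le_norm x z))
      rwa [hx, hz, one_mul] at this
    · rw [(inner_eq_neg_one_iff_of_norm_eq_one hx hz).1 h.symm, neg_neg]
  set w := z - c • x
  have hxw : ⟪x, w⟫_ℝ = 0 := by
    rw [inner_sub_right, real_inner_smul_right, real_inner_self_eq_norm_sq, hx]; ring
  have hw : ‖w‖ = √(1 - c ^ 2) := by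
    rw [← sqrt_sq (norm_nonneg w), norm_sub_sq_real, norm_smul, real_inner_smul_right,
      real_inner_comm, hz, hx, norm_eq_abs, mul_one, sq_abs]
    congr 1
    simp only [c]
    ring
  have hw0 : w ≠ 0 := norm_pos_iff.1 (hw ▸ sqrt_pos.2 (by nlinarith))
  refine ⟨‖w‖⁻¹ • w, norm_smul_inv_norm hw0, by rw [real_inner_smul_right, hxw, mul_zero],
    arccos c, ⟨arccos_pos.2 hc1, arccos_lt_pi.2 hc1'⟩, ?_⟩
  rw [greatArc, cos_arccos hc1'.le hc1.le, sin_arccos, ← hw,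
    smul_inv_smul₀ (norm_ne_zero_iff.2 hw0), add_sub_cancel]

end GreatArc

section Sphere

variable {n : ℕ} {x u : EuclideanSpace ℝ (Fin (n + 1))}

lemma sphDist_greatArc (hx : ‖x‖ = 1) (hu : ‖u‖ = 1) (hxu : ⟪x, u⟫_ℝ = 0) {s t : ℝ}
    (hst : |s - t| ≤ π) : sphDist (greatArc x u s) (greatArc x u t) = |s - t| := by
  rw [sphDist, inner_greatArc hx hu hxu, ← cos_abs, arccos_cos (abs_nonneg _) hst]

lemma sphDist_greatArc_right (hx : ‖x‖ = 1) (hu : ‖u‖ = 1) (hxu : ⟪x, u⟫_ℝ = 0) {d : ℝ}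
    (hd : d ∈ Icc 0 π) : sphDist x (greatArc x u d) = d := by
  have h := sphDist_greatArc hx hu hxu (s := 0) (t := d)
    (by simpa [abs_of_nonneg hd.1] using hd.2)
  rwa [greatArc_zero, zero_sub, abs_neg, abs_of_nonneg hd.1] at h

lemma isMinGeodesic_greatArc (hx : ‖x‖ = 1) (hu : ‖u‖ = 1) (hxu : ⟪x, u⟫_ℝ = 0) {d : ℝ}
    (hd : d ∈ Icc 0 π) : IsMinGeodesic x (greatArc x u d) (greatArc x u) := by
  rw [IsMinGeodesic, sphDist_greatArc_right hx hu hxu hd]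
  refine ⟨fun t _ => by simpa using norm_greatArc hx hu hxu t, greatArc_zero x u, rfl,
    fun s hs t ht => sphDist_greatArc hx hu hxu ?_⟩
  rw [abs_sub_le_iff]
  constructor <;> linarith [hs.1, hs.2, ht.1, ht.2, hd.2]

variable {D : Set (EuclideanSpace ℝ (Fin (n + 1)))}

lemma SConvex.greatArc_mem (hD : SConvex D) (hx : ‖x‖ = 1) (hu : ‖u‖ = 1)
    (hxu : ⟪x, u⟫_ℝ = 0) (hxD : x ∈ D) {d : ℝ} (hd : d ∈ Icc 0 π) (hdD : greatArc x u d ∈ D)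
    {t : ℝ} (ht : t ∈ Icc 0 d) : greatArc x u t ∈ D :=
  hD x hxD _ hdD _ (isMinGeodesic_greatArc hx hu hxu hd) t
    (by rwa [sphDist_greatArc_right hx hu hxu hd])

/-- Otherwise the half great circles from `x` to `-x` sweep out the whole sphere. -/
lemma SConvex.neg_notMem (hD : SConvex D) (hsub : D ⊆ Metric.sphere 0 1)
    (hproper : D ≠ Metric.sphere 0 1) {x : EuclideanSpace ℝ (Fin (n + 1))} (hxD : x ∈ D) :
    -x ∉ D := by
  intro hnxD
  refine hproper (hsub.antisymm fun z hz => ?_)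
  have hx : ‖x‖ = 1 := by simpa using hsub hxD
  rw [mem_sphere_zero_iff_norm] at hz
  by_cases hzx : z = x
  · rwa [hzx]
  by_cases hzx' : z = -x
  · rwa [hzx']
  obtain ⟨u, hu, hxu, t, ht, rfl⟩ := exists_eq_greatArc hx hz hzx hzx'
  have hπ : greatArc x u π = -x := by simp [greatArc]
  exact hD.greatArc_mem hx hu hxu hxD ⟨pi_pos.le, le_rfl⟩ (hπ ▸ hnxD) (Ioo_subset_Icc_self ht)

lemma SConvex.exists_add_eq_smul_mem (hD : SConvex D) (hsub : D ⊆ Metric.sphere 0 1)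
    (hproper : D ≠ Metric.sphere 0 1) {x y : EuclideanSpace ℝ (Fin (n + 1))} (hxD : x ∈ D)
    (hyD : y ∈ D) {p q : ℝ} (hp : 0 < p) (hq : 0 < q) :
    ∃ N > (0 : ℝ), ∃ z ∈ D, p • x + q • y = N • z := by
  have hx : ‖x‖ = 1 := by simpa using hsub hxD
  by_cases hyx : y = x
  · exact ⟨p + q, by positivity, x, hxD, by rw [hyx, add_smul]⟩
  have hyx' : y ≠ -x := fun h => hD.neg_notMem hsub hproper hxD (h ▸ hyD)
  obtain ⟨u, hu, hxu, d, hd, rfl⟩ := exists_eq_greatArc hx (by simpa using hsub hyD) hyx hyx'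
  obtain ⟨N, hN, t, ht, heq⟩ := exists_add_smul_greatArc_eq_smul_greatArc x u hd hp hq
  exact ⟨N, hN, _, hD.greatArc_mem hx hu hxu hxD (Ioo_subset_Icc_self hd) hyD ht, heq⟩

end Sphere

section Cone

variable {F : Type*} [NormedAddCommGroup F] [NormedSpace ℝ F] {D : Set F}

/-- The cone `{0} ∪ ℝ_{>0} • D` over a subset `D` of the unit sphere, written through
normalization so that it is visibly closed when `D` is. -/
def coneOver (D : Set F) : Set F := {w | w = 0 ∨ ‖w‖⁻¹ • w ∈ D}

lemma isClosed_coneOver (hD : IsClosed D) : IsClosed (coneOver D) := by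
  have hcompl : (coneOver D)ᶜ = {0}ᶜ ∩ (fun w : F => ‖w‖⁻¹ • w) ⁻¹' Dᶜ := by
    ext w; simp [coneOver]
  rw [← isOpen_compl_iff, hcompl]
  exact ((continuous_norm.continuousOn.inv₀ fun w hw => norm_ne_zero_iff.2 hw).smul
    continuousOn_id).isOpen_inter_preimage isOpen_compl_singleton hD.isOpen_compl

lemma smul_mem_coneOver (hsub : D ⊆ Metric.sphere 0 1) {r : ℝ} (hr : 0 ≤ r) {x : F}
    (hx : x ∈ D) : r • x ∈ coneOver D := by
  rcases hr.eq_or_lt with rfl | hr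
  · exact Or.inl (zero_smul ℝ x)
  have hx1 : ‖x‖ = 1 := by simpa using hsub hx
  right
  rwa [norm_smul, hx1, mul_one, norm_of_nonneg hr.le, inv_smul_smul₀ hr.ne']

lemma norm_smul_inv_norm_smul (w : F) : ‖w‖ • ‖w‖⁻¹ • w = w := by
  rcases eq_or_ne w 0 with rfl | hw
  · simp
  · exact smul_inv_smul₀ (norm_ne_zero_iff.2 hw) w

end Cone

section InnerProductSpace

variable {F : Type*} [NormedAddCommGroup F] [InnerProductSpace ℝ F]

lemma IsCompact.exists_forall_inner_pos {S : Set F} (hS : IsCompact S)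
    (h : ∀ x ∈ S, ∃ y, (∀ w ∈ S, 0 ≤ ⟪w, y⟫_ℝ) ∧ 0 < ⟪x, y⟫_ℝ) :
    ∃ y, ∀ x ∈ S, 0 < ⟪x, y⟫_ℝ := by
  choose! y hy_nonneg hy_pos using h
  obtain ⟨t, htS, hcover⟩ := hS.elim_nhds_subcover (fun x => {w | 0 < ⟪w, y x⟫_ℝ}) fun x hx =>
    (isOpen_lt continuous_const (continuous_id.inner continuous_const)).mem_nhds (hy_pos x hx)
  refine ⟨∑ x ∈ t, y x, fun w hw => ?_⟩
  obtain ⟨x, hxt, hwx⟩ := mem_iUnion₂.1 (hcover hw)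
  rw [inner_sum]
  exact Finset.sum_pos' (fun x' hx' => hy_nonneg x' (htS x' hx') w hw) ⟨x, hxt, hwx⟩

lemma Submodule.exists_norm_eq_one_forall_inner_neg (V : Submodule ℝ F)
    [V.HasOrthogonalProjection] (hV : V ≠ ⊥) {S : Set F} {y : F}
    (hy : ∀ x ∈ S, 0 < ⟪x, y⟫_ℝ) :
    ∃ z, ‖z‖ = 1 ∧ z ∈ V ∧ ∀ x ∈ S, x ∈ V → ⟪z, x⟫_ℝ < 0 := by
  set p := V.starProjection y
  have hp : ∀ x ∈ V, ⟪p, x⟫_ℝ = ⟪x, y⟫_ℝ := fun x hx => by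
    rw [V.inner_starProjection_left_eq_right, V.starProjection_eq_self_iff.2 hx, real_inner_comm]
  rcases eq_or_ne p 0 with hp0 | hp0
  · obtain ⟨v, hvV, hv0⟩ := V.exists_mem_ne_zero_of_ne_bot hV
    refine ⟨‖v‖⁻¹ • v, norm_smul_inv_norm hv0, V.smul_mem _ hvV, fun x hx hxV => ?_⟩
    have hpos := hy x hx
    rw [← hp x hxV, hp0, inner_zero_left] at hpos
    exact (lt_irrefl 0 hpos).elim
  · refine ⟨-‖p‖⁻¹ • p, ?_, V.smul_mem _ (V.starProjection_apply_mem y), fun x hx hxV => ?_⟩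
    · rw [norm_smul, norm_neg, norm_inv, norm_norm, inv_mul_cancel₀ (norm_ne_zero_iff.2 hp0)]
    · rw [real_inner_smul_left, hp x hxV]
      exact mul_neg_of_neg_of_pos (neg_neg_of_pos (inv_pos.2 (norm_pos_iff.2 hp0))) (hy x hx)

end InnerProductSpace

section SConvexCone

variable {n : ℕ} {D : Set (EuclideanSpace ℝ (Fin (n + 1)))}

noncomputable def SConvex.properCone (hD : SConvex D) (hsub : D ⊆ Metric.sphere 0 1)
    (hproper : D ≠ Metric.sphere 0 1) (hclosed : IsClosed D) :
    ProperCone ℝ (EuclideanSpace ℝ (Fin (n + 1))) where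
  carrier := coneOver D
  zero_mem' := Or.inl rfl
  smul_mem' := by
    rintro ⟨c, hc⟩ w (rfl | hw)
    · exact Or.inl (smul_zero c)
    · rw [← norm_smul_inv_norm_smul w, Nonneg.mk_smul, smul_smul]
      exact smul_mem_coneOver hsub (by positivity) hw
  add_mem' := by
    intro w₁ w₂ h₁ h₂
    rcases eq_or_ne w₁ 0 with rfl | hw₁
    · rwa [zero_add]
    rcases eq_or_ne w₂ 0 with rfl | hw₂
    · rwa [add_zero]
    obtain ⟨N, hN, z, hz, heq⟩ := hD.exists_add_eq_smul_mem hsub hproper (h₁.resolve_left hw₁)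
      (h₂.resolve_left hw₂) (norm_pos_iff.2 hw₁) (norm_pos_iff.2 hw₂)
    rw [norm_smul_inv_norm_smul, norm_smul_inv_norm_smul] at heq
    exact heq ▸ smul_mem_coneOver hsub hN.le hz
  isClosed' := isClosed_coneOver hclosed

lemma SConvex.exists_forall_inner_pos (hD : SConvex D) (hsub : D ⊆ Metric.sphere 0 1)
    (hproper : D ≠ Metric.sphere 0 1) (hclosed : IsClosed D) :
    ∃ y, ∀ x ∈ D, 0 < ⟪x, y⟫_ℝ := by
  let K := hD.properCone hsub hproper hclosed
  have hDK : ∀ x ∈ D, x ∈ K := fun x hx =>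
    show x ∈ coneOver D from one_smul ℝ x ▸ smul_mem_coneOver hsub zero_le_one hx
  refine ((isCompact_sphere 0 1).of_isClosed_subset hclosed hsub).exists_forall_inner_pos
    fun x hx => ?_
  have hx1 : ‖x‖ = 1 := by simpa using hsub hx
  have hnx : -x ∉ K := by
    rintro (h | h)
    · simp [neg_eq_zero.1 h] at hx1
    · rw [norm_neg, hx1, inv_one, one_smul] at h
      exact hD.neg_notMem hsub hproper hx h
  obtain ⟨y, hy, hxy⟩ := K.hyperplane_separation' hnx
  exact ⟨y, fun w hw => hy w (hDK w hw), by rwa [inner_neg_left, neg_lt_zero] at hxy⟩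

end SConvexCone

theorem stmt_5_general (n : ℕ)
    (D : Set (EuclideanSpace ℝ (Fin (n + 1))))
    (hsub : D ⊆ Metric.sphere 0 1)
    (hclosed : IsClosed D)
    (hproper : D ≠ Metric.sphere 0 1)
    (hconv : SConvex D)
    (V : Submodule ℝ (EuclideanSpace ℝ (Fin (n + 1))))
    (hV : Module.finrank ℝ V = 3) :
    ∃ z, z ∈ Metric.sphere (0 : EuclideanSpace ℝ (Fin (n + 1))) 1 ∧ z ∈ V ∧
      ∀ x ∈ D, x ∈ V → ⟪z, x⟫_ℝ < 0 := by
  obtain ⟨y, hy⟩ := hconv.exists_forall_inner_pos hsub hproper hclosed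
  have hV0 : V ≠ ⊥ := by
    rintro rfl
    simp at hV
  obtain ⟨z, hz, hzV, hzD⟩ := V.exists_norm_eq_one_forall_inner_neg hV0 hy
  exact ⟨z, mem_sphere_zero_iff_norm.2 hz, hzV, hzD⟩

/-- A closed s-convex proper subset of the round `n`-sphere with nonempty interior meets every
great 2-sphere (the intersection of the sphere with a 3-dimensional linear subspace) in a set
contained in an open hemisphere of that great 2-sphere. -/
theorem stmt_5 (n : ℕ) (hn : 2 ≤ n)
    (D : Set (EuclideanSpace ℝ (Fin (n + 1))))
    (hsub : D ⊆ Metric.sphere 0 1)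
    (hclosed : IsClosed D)
    (hproper : D ≠ Metric.sphere 0 1)
    (hconv : SConvex D)
    (hint : (interior ((↑) ⁻¹' D :
      Set (Metric.sphere (0 : EuclideanSpace ℝ (Fin (n + 1))) 1))).Nonempty)
    (V : Submodule ℝ (EuclideanSpace ℝ (Fin (n + 1))))
    (hV : Module.finrank ℝ V = 3) :
    ∃ z, z ∈ Metric.sphere (0 : EuclideanSpace ℝ (Fin (n + 1))) 1 ∧ z ∈ V ∧
      ∀ x ∈ D, x ∈ V → ⟪z, x⟫_ℝ < 0 :=
  stmt_5_general n D hsub hclosed hproper hconv V hV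
end

section
/- Let n ≥ 2 and let C be an open, w-convex, proper subset of the round n-sphere Sⁿ that is maximal among open w-convex proper subsets (i.e., every open w-convex proper subset of Sⁿ containing C equals C). Then for every 3-dimensional linear subspace V of EuclideanSpace ℝ (Fin (n+1)), the intersection C ∩ V is contained in an open hemisphere of the great 2-sphere Sⁿ ∩ V: there exists z ∈ Sⁿ ∩ V such that ⟪z, x⟫_ℝ < 0 for all x ∈ C ∩ V. (This is the case X = Sⁿ of the Proposition; the totally geodesic 2-spheres of curvature 1 in Sⁿ are exactly the great 2-spheres.) -/
/-- `D` is w-convex: any two points of `D` are joined by some minimizing geodesic inside `D`. -/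
def WConvex {n : ℕ} (D : Set (EuclideanSpace ℝ (Fin (n + 1)))) : Prop :=
  ∀ x ∈ D, ∀ y ∈ D, ∃ γ : ℝ → EuclideanSpace ℝ (Fin (n + 1)),
    IsMinGeodesic x y γ ∧ ∀ t ∈ Set.Icc (0 : ℝ) (sphDist x y), γ t ∈ D

/-- `C` is open in the subspace topology of the round unit `n`-sphere. -/
def IsOpenInSphere {n : ℕ} (C : Set (EuclideanSpace ℝ (Fin (n + 1)))) : Prop :=
  IsOpen ((↑) ⁻¹' C : Set (Metric.sphere (0 : EuclideanSpace ℝ (Fin (n + 1))) 1))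

/-!
An open, w-convex, proper subset `C` of the sphere already lies in an open hemisphere. Between
non-antipodal points the only minimizing geodesic is the great-circle arc, which meets every ray
`(0, ∞) • (α • x + β • y)` with `α, β > 0`; hence w-convexity makes the cone `[0, ∞) • C` convex.
Openness of `C` puts `C` into the interior of the cone and properness keeps `0` out of it, so
Hahn–Banach gives `p` with `⟪p, x⟫ < 0` on `C`. Projecting `p` orthogonally onto `V` gives the pole
of the required hemisphere of the great 2-sphere (if the projection vanishes, `C ∩ V` is empty).
-/

open Real Set Metric Filter Topology Pointwise

theorem sin_smul_eq_of_inner_eq_cos {F : Type*} [NormedAddCommGroup F] [InnerProductSpace ℝ F]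
    {x y u : F} (hx : ‖x‖ = 1) (hy : ‖y‖ = 1) (hu : ‖u‖ = 1)
    {d t : ℝ} (hxy : ⟪x, y⟫_ℝ = cos d) (hxu : ⟪x, u⟫_ℝ = cos t)
    (hyu : ⟪y, u⟫_ℝ = cos (d - t)) :
    sin d • u = sin (d - t) • x + sin t • y := by
  -- the squared norm of the difference vanishes by
  -- `sin² s + sin² t + 2 sin s sin t cos (s + t) = sin² (s + t)` with `d = s + t`
  rw [← sub_eq_zero, ← inner_self_eq_zero (𝕜 := ℝ)]
  have hxx : ⟪x, x⟫_ℝ = 1 := by rw [real_inner_self_eq_norm_sq, hx, one_pow]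
  have hyy : ⟪y, y⟫_ℝ = 1 := by rw [real_inner_self_eq_norm_sq, hy, one_pow]
  have huu : ⟪u, u⟫_ℝ = 1 := by rw [real_inner_self_eq_norm_sq, hu, one_pow]
  simp only [inner_sub_left, inner_sub_right, inner_add_left, inner_add_right,
    real_inner_smul_left, real_inner_smul_right, real_inner_comm x u, real_inner_comm y u,
    real_inner_comm x y, hxx, hyy, huu, hxy, hxu, hyu]
  obtain ⟨s, rfl⟩ : ∃ s, d = s + t := ⟨d - t, by ring⟩
  simp only [add_sub_cancel_right, sin_add, cos_add]
  linear_combination (-sin s ^ 2) * sin_sq_add_cos_sq t - sin t ^ 2 * sin_sq_add_cos_sq s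

theorem exists_mem_Ioo_mul_sin_eq_mul_sin {d α β : ℝ} (hd₀ : 0 < d) (hdπ : d < π)
    (hα : 0 < α) (hβ : 0 < β) : ∃ t ∈ Ioo 0 d, α * sin t = β * sin (d - t) := by
  have hsin := sin_pos_of_pos_of_lt_pi hd₀ hdπ
  obtain ⟨t, ht, hft⟩ := intermediate_value_Ioo hd₀.le
    (f := fun t => α * sin t - β * sin (d - t)) (by fun_prop)
    (show (0 : ℝ) ∈ Ioo _ _ by
      simp only [sin_zero, sub_zero, sub_self]
      constructor <;> nlinarith)
  exact ⟨t, ht, sub_eq_zero.1 hft⟩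

theorem sphere_subset_of_zero_mem_interior_Ici_smul {F : Type*} [NormedAddCommGroup F]
    [NormedSpace ℝ F] {C : Set F} (hsub : C ⊆ sphere 0 1)
    (h₀ : (0 : F) ∈ interior (Ici (0 : ℝ) • C)) : sphere (0 : F) 1 ⊆ C := by
  obtain ⟨ε, hε, hball⟩ := Metric.mem_nhds_iff.1 (mem_interior_iff_mem_nhds.1 h₀)
  intro u hu
  have hu₁ : ‖u‖ = 1 := mem_sphere_zero_iff_norm.1 hu
  obtain ⟨a, ha, z, hz, hau⟩ := hball (show (ε / 2) • u ∈ ball 0 ε by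
    rw [mem_ball_zero_iff, norm_smul, hu₁, mul_one, Real.norm_of_nonneg (by positivity)]
    linarith)
  have hz₁ : ‖z‖ = 1 := mem_sphere_zero_iff_norm.1 (hsub hz)
  have ha' : a = ε / 2 := by
    simpa [norm_smul, hz₁, hu₁, abs_of_nonneg (mem_Ici.1 ha), abs_of_pos hε]
      using congrArg norm hau
  rw [ha'] at hau
  rwa [← smul_right_injective F (by positivity : ε / 2 ≠ 0) hau]

theorem Submodule.exists_mem_sphere_inner_neg {F : Type*} [NormedAddCommGroup F]
    [InnerProductSpace ℝ F] {V : Submodule ℝ F} [V.HasOrthogonalProjection] (hV : V ≠ ⊥)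
    {S : Set F} {p : F} (hp : ∀ x ∈ S, ⟪p, x⟫_ℝ < 0) :
    ∃ z, z ∈ sphere (0 : F) 1 ∧ z ∈ V ∧ ∀ x ∈ S, x ∈ V → ⟪z, x⟫_ℝ < 0 := by
  obtain ⟨w, hwV, hw₀, hw⟩ : ∃ w ∈ V, w ≠ 0 ∧ ∀ x ∈ S, x ∈ V → ⟪w, x⟫_ℝ < 0 := by
    have hproj : ∀ x ∈ V, ⟪V.starProjection p, x⟫_ℝ = ⟪p, x⟫_ℝ := fun x hx => by
      rw [inner_starProjection_left_eq_right, starProjection_eq_self_iff.2 hx]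
    by_cases hq : V.starProjection p = 0
    · obtain ⟨v, hvV, hv₀⟩ := (Submodule.ne_bot_iff V).1 hV
      refine ⟨v, hvV, hv₀, fun x hx hxV => absurd (hp x hx) ?_⟩
      rw [← hproj x hxV, hq, inner_zero_left]
      exact lt_irrefl 0
    · exact ⟨_, V.starProjection_apply_mem p, hq, fun x hx hxV => hproj x hxV ▸ hp x hx⟩
  refine ⟨‖w‖⁻¹ • w, ?_, V.smul_mem _ hwV, fun x hx hxV => ?_⟩
  · simp [norm_smul, hw₀]
  · rw [real_inner_smul_left]
    exact mul_neg_of_pos_of_neg (by positivity) (hw x hx hxV)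

section Sphere

variable {n : ℕ}

local notation "E" => EuclideanSpace ℝ (Fin (n + 1))

theorem cos_sphDist {x y : E} (hx : ‖x‖ = 1) (hy : ‖y‖ = 1) : cos (sphDist x y) = ⟪x, y⟫_ℝ :=
  cos_arccos (neg_one_le_real_inner_of_norm_eq_one hx hy) (real_inner_le_one_of_norm_eq_one hx hy)

theorem sphDist_pos {x y : E} (hx : ‖x‖ = 1) (hy : ‖y‖ = 1) (hxy : x ≠ y) :
    0 < sphDist x y :=
  arccos_pos.2 <| (real_inner_le_one_of_norm_eq_one hx hy).lt_of_ne
    (mt (inner_eq_one_iff_of_norm_eq_one hx hy).1 hxy)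

theorem sphDist_lt_pi {x y : E} (hx : ‖x‖ = 1) (hy : ‖y‖ = 1) (hxy : x ≠ -y) :
    sphDist x y < π :=
  arccos_lt_pi.2 <| (neg_one_le_real_inner_of_norm_eq_one hx hy).lt_of_ne
    (Ne.symm (mt (inner_eq_neg_one_iff_of_norm_eq_one hx hy).1 hxy))

theorem IsMinGeodesic.norm_apply {x y : E} {γ : ℝ → E} (hγ : IsMinGeodesic x y γ) {t : ℝ}
    (ht : t ∈ Icc 0 (sphDist x y)) : ‖γ t‖ = 1 :=
  mem_sphere_zero_iff_norm.1 (hγ.1 t ht)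

theorem IsMinGeodesic.norm_left {x y : E} {γ : ℝ → E} (hγ : IsMinGeodesic x y γ) : ‖x‖ = 1 :=
  hγ.2.1 ▸ hγ.norm_apply ⟨le_rfl, arccos_nonneg _⟩

theorem IsMinGeodesic.norm_right {x y : E} {γ : ℝ → E} (hγ : IsMinGeodesic x y γ) : ‖y‖ = 1 :=
  hγ.2.2.1 ▸ hγ.norm_apply ⟨arccos_nonneg _, le_rfl⟩

theorem IsMinGeodesic.inner_apply_eq_cos {x y : E} {γ : ℝ → E} (hγ : IsMinGeodesic x y γ)
    {s t : ℝ} (hs : s ∈ Icc 0 (sphDist x y)) (ht : t ∈ Icc 0 (sphDist x y)) :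
    ⟪γ s, γ t⟫_ℝ = cos (s - t) := by
  rw [← cos_sphDist (hγ.norm_apply hs) (hγ.norm_apply ht), hγ.2.2.2 s hs t ht, cos_abs]

theorem IsMinGeodesic.sin_smul_apply {x y : E} {γ : ℝ → E} (hγ : IsMinGeodesic x y γ) {t : ℝ}
    (ht : t ∈ Icc 0 (sphDist x y)) :
    sin (sphDist x y) • γ t = sin (sphDist x y - t) • x + sin t • y := by
  have h0 : (0 : ℝ) ∈ Icc 0 (sphDist x y) := ⟨le_rfl, arccos_nonneg _⟩
  have hd : sphDist x y ∈ Icc 0 (sphDist x y) := ⟨arccos_nonneg _, le_rfl⟩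
  refine sin_smul_eq_of_inner_eq_cos hγ.norm_left hγ.norm_right (hγ.norm_apply ht)
    (cos_sphDist hγ.norm_left hγ.norm_right).symm ?_ ?_
  · have := hγ.inner_apply_eq_cos h0 ht
    rwa [hγ.2.1, zero_sub, cos_neg] at this
  · have := hγ.inner_apply_eq_cos hd ht
    rwa [hγ.2.2.1] at this

theorem WConvex.smul_add_smul_mem {C : Set E} (hsub : C ⊆ sphere 0 1) (hconv : WConvex C)
    {x y : E} (hx : x ∈ C) (hy : y ∈ C) {α β : ℝ} (hα : 0 ≤ α) (hβ : 0 ≤ β) :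
    α • x + β • y ∈ Ici (0 : ℝ) • C := by
  rcases hα.eq_or_lt with rfl | hα
  · simpa using smul_mem_smul (mem_Ici.2 hβ) hy
  rcases hβ.eq_or_lt with rfl | hβ
  · simpa using smul_mem_smul (mem_Ici.2 hα.le) hx
  by_cases hxy : x = y
  · subst hxy
    simpa [add_smul] using smul_mem_smul (mem_Ici.2 (add_pos hα hβ).le) hx
  by_cases hxy' : x = -y
  · subst hxy'
    rcases le_total β α with h | h
    · rw [show α • -y + β • y = (α - β) • -y by module]
      exact smul_mem_smul (mem_Ici.2 (sub_nonneg.2 h)) hx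
    · rw [show α • -y + β • y = (β - α) • y by module]
      exact smul_mem_smul (mem_Ici.2 (sub_nonneg.2 h)) hy
  have hx₁ : ‖x‖ = 1 := mem_sphere_zero_iff_norm.1 (hsub hx)
  have hy₁ : ‖y‖ = 1 := mem_sphere_zero_iff_norm.1 (hsub hy)
  have hd₀ := sphDist_pos hx₁ hy₁ hxy
  have hdπ := sphDist_lt_pi hx₁ hy₁ hxy'
  obtain ⟨γ, hγ, hγC⟩ := hconv x hx y hy
  obtain ⟨t, ht, hαβ⟩ := exists_mem_Ioo_mul_sin_eq_mul_sin hd₀ hdπ hα hβ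
  have ht' := Ioo_subset_Icc_self ht
  have hsin : 0 < sin t := sin_pos_of_pos_of_lt_pi ht.1 (ht.2.trans hdπ)
  have hcoef : β / sin t * sin (sphDist x y - t) = α := by
    field_simp
    linarith
  have hray : α • x + β • y = (β / sin t * sin (sphDist x y)) • γ t := by
    rw [← smul_smul, hγ.sin_smul_apply ht', smul_add, smul_smul, smul_smul,
      hcoef, div_mul_cancel₀ _ hsin.ne']
  rw [hray]
  exact smul_mem_smul
    (mem_Ici.2 (mul_pos (div_pos hβ hsin) (sin_pos_of_pos_of_lt_pi hd₀ hdπ)).le) (hγC t ht')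

theorem WConvex.convex_Ici_smul {C : Set E} (hsub : C ⊆ sphere 0 1) (hconv : WConvex C) :
    Convex ℝ (Ici (0 : ℝ) • C) := by
  rintro _ ⟨a, ha, z, hz, rfl⟩ _ ⟨b, hb, w, hw, rfl⟩ p q hp hq -
  simp only [smul_smul]
  exact hconv.smul_add_smul_mem hsub hz hw (mul_nonneg hp ha) (mul_nonneg hq hb)

theorem IsOpenInSphere.subset_interior_Ici_smul {C : Set E}
    (hsub : C ⊆ sphere 0 1) (hopen : IsOpenInSphere C) : C ⊆ interior (Ici (0 : ℝ) • C) := by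
  intro x hx
  have hx₀ : x ≠ 0 := ne_zero_of_mem_unit_sphere ⟨x, hsub hx⟩
  have hCx : C ∈ 𝓝[sphere 0 1] x := by
    have := hopen.mem_nhds (x := ⟨x, hsub hx⟩) hx
    rw [mem_nhds_subtype_iff_nhdsWithin] at this
    exact mem_of_superset this (image_preimage_subset _ _)
  have hnormalize : Tendsto (fun v => ‖v‖⁻¹ • v) (𝓝 x) (𝓝[sphere 0 1] x) := by
    refine tendsto_nhdsWithin_iff.2 ⟨?_, ?_⟩
    · have : ContinuousAt (fun v => ‖v‖⁻¹ • v) x := by fun_prop (disch := simpa)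
      simpa [mem_sphere_zero_iff_norm.1 (hsub hx)] using this.tendsto
    · filter_upwards [eventually_ne_nhds hx₀] with v hv
      simp [norm_smul, hv]
  rw [mem_interior_iff_mem_nhds]
  filter_upwards [hnormalize hCx, eventually_ne_nhds hx₀] with v hvC hv₀
  refine ⟨‖v‖, norm_nonneg v, _, hvC, ?_⟩
  simp only [smul_smul, mul_inv_cancel₀ (norm_ne_zero_iff.2 hv₀), one_smul]

theorem exists_inner_neg_of_wConvex {C : Set E}
    (hsub : C ⊆ sphere 0 1) (hopen : IsOpenInSphere C) (hconv : WConvex C)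
    (hproper : C ≠ sphere 0 1) : ∃ p, ∀ x ∈ C, ⟪p, x⟫_ℝ < 0 := by
  have h₀ : 0 ∉ interior (Ici (0 : ℝ) • C) := fun h₀ =>
    hproper (hsub.antisymm (sphere_subset_of_zero_mem_interior_Ici_smul hsub h₀))
  obtain ⟨f, hf⟩ := geometric_hahn_banach_open_point (hconv.convex_Ici_smul hsub).interior
    isOpen_interior h₀
  refine ⟨(InnerProductSpace.toDual ℝ _).symm f, fun x hx => ?_⟩
  rw [InnerProductSpace.toDual_symm_apply]
  simpa using hf x (hopen.subset_interior_Ici_smul hsub hx)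

end Sphere

theorem stmt_6_general (n : ℕ)
    (C : Set (EuclideanSpace ℝ (Fin (n + 1))))
    (hsub : C ⊆ Metric.sphere 0 1)
    (hopen : IsOpenInSphere C)
    (hconv : WConvex C)
    (hproper : C ≠ Metric.sphere 0 1)
    (V : Submodule ℝ (EuclideanSpace ℝ (Fin (n + 1))))
    (hV : Module.finrank ℝ V = 3) :
    ∃ z, z ∈ Metric.sphere (0 : EuclideanSpace ℝ (Fin (n + 1))) 1 ∧ z ∈ V ∧
      ∀ x ∈ C, x ∈ V → ⟪z, x⟫_ℝ < 0 := by
  obtain ⟨p, hp⟩ := exists_inner_neg_of_wConvex hsub hopen hconv hproper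
  have hV₀ : V ≠ ⊥ := by
    rintro rfl
    simp at hV
  exact V.exists_mem_sphere_inner_neg hV₀ hp

/-- A maximal open w-convex proper subset of the round `n`-sphere meets every great 2-sphere
(the intersection of the sphere with a 3-dimensional linear subspace) in a set contained in an
open hemisphere of that great 2-sphere. -/
theorem stmt_6 (n : ℕ) (hn : 2 ≤ n)
    (C : Set (EuclideanSpace ℝ (Fin (n + 1))))
    (hsub : C ⊆ Metric.sphere 0 1)
    (hopen : IsOpenInSphere C)
    (hconv : WConvex C)
    (hproper : C ≠ Metric.sphere 0 1)
    (hmax : ∀ C' : Set (EuclideanSpace ℝ (Fin (n + 1))),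
      C' ⊆ Metric.sphere 0 1 → IsOpenInSphere C' → WConvex C' →
      C' ≠ Metric.sphere 0 1 → C ⊆ C' → C' = C)
    (V : Submodule ℝ (EuclideanSpace ℝ (Fin (n + 1))))
    (hV : Module.finrank ℝ V = 3) :
    ∃ z, z ∈ Metric.sphere (0 : EuclideanSpace ℝ (Fin (n + 1))) 1 ∧ z ∈ V ∧
      ∀ x ∈ C, x ∈ V → ⟪z, x⟫_ℝ < 0 :=
  stmt_6_general n C hsub hopen hconv hproper V hV
end
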